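/- arXiv:2102.02632 — 4 statements merged into one kernel-verified Lean document; each statement's English description precedes it below -/
import Mathlib

section
/- For the trajectory z(t) = (z_T sinh(ω(t−t₀)) + z₀ sinh(ω(T−t)))/sinh(ω(T−t₀)) with velocity a = z', the quantity ∫_{t₀}^{T} ((K/2)‖a(t)‖² + (Kω²/2)‖z(t)‖²) dt equals (Kω/(2 sinh(ω(T−t₀)))) · ((‖z₀‖² + ‖z_T‖²) cosh(ω(T−t₀)) − 2 (z₀ ⋅ z_T)). -/
/-! Along a solution of `z'' = ω² z` one has `(d/dt) ⟪z, z'⟫ = ‖z'‖² + ω² ‖z‖²`, so the action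
integral collapses to the boundary term `(K/2) (⟪z T, z' T⟫ - ⟪z t₀, z' t₀⟫)`. For the sinh
interpolant between `z₀` and `z_T` both endpoint velocities are explicit, which gives the formula. -/

open Real intervalIntegral

section

variable {E : Type*} [NormedAddCommGroup E] [InnerProductSpace ℝ E]

theorem integral_norm_sq_deriv_add_sq_mul_norm_sq {z v : ℝ → E} {ω a b : ℝ}
    (hz : ∀ t, HasDerivAt z (v t) t) (hv : ∀ t, HasDerivAt v (ω ^ 2 • z t) t) :
    ∫ t in a..b, (‖v t‖ ^ 2 + ω ^ 2 * ‖z t‖ ^ 2) = inner ℝ (z b) (v b) - inner ℝ (z a) (v a) := by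
  have hderiv : ∀ t, HasDerivAt (fun t => inner ℝ (z t) (v t))
      (‖v t‖ ^ 2 + ω ^ 2 * ‖z t‖ ^ 2) t := fun t => by
    refine ((hz t).inner ℝ (hv t)).congr_deriv ?_
    rw [real_inner_smul_right, real_inner_self_eq_norm_sq, real_inner_self_eq_norm_sq]
    ring
  have hzc : Continuous z := continuous_iff_continuousAt.2 fun t => (hz t).continuousAt
  have hvc : Continuous v := continuous_iff_continuousAt.2 fun t => (hv t).continuousAt
  exact integral_eq_sub_of_hasDerivAt (fun t _ => hderiv t)
    ((by fun_prop : Continuous fun t => ‖v t‖ ^ 2 + ω ^ 2 * ‖z t‖ ^ 2).intervalIntegrable a b)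

noncomputable def sinhBridge (ω t₀ T : ℝ) (z₀ zT : E) (t : ℝ) : E :=
  (sinh (ω * (T - t₀)))⁻¹ • (sinh (ω * (t - t₀)) • zT + sinh (ω * (T - t)) • z₀)

noncomputable def sinhBridgeVelocity (ω t₀ T : ℝ) (z₀ zT : E) (t : ℝ) : E :=
  (ω / sinh (ω * (T - t₀))) • (cosh (ω * (t - t₀)) • zT - cosh (ω * (T - t)) • z₀)

variable (ω t₀ T : ℝ) (z₀ zT : E)

theorem hasDerivAt_mul_sub_left (c t : ℝ) : HasDerivAt (fun t => ω * (t - c)) ω t := by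
  simpa using ((hasDerivAt_id t).sub_const c).const_mul ω

theorem hasDerivAt_mul_sub_right (c t : ℝ) : HasDerivAt (fun t => ω * (c - t)) (-ω) t := by
  simpa using ((hasDerivAt_id t).const_sub c).const_mul ω

theorem hasDerivAt_sinhBridge (t : ℝ) :
    HasDerivAt (sinhBridge ω t₀ T z₀ zT) (sinhBridgeVelocity ω t₀ T z₀ zT t) t := by
  have h := ((((hasDerivAt_mul_sub_left ω t₀ t).sinh).smul_const zT).add
    (((hasDerivAt_mul_sub_right ω T t).sinh).smul_const z₀)).const_smul (sinh (ω * (T - t₀)))⁻¹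
  refine h.congr_deriv ?_
  simp only [sinhBridgeVelocity]
  module

theorem hasDerivAt_sinhBridgeVelocity (t : ℝ) :
    HasDerivAt (sinhBridgeVelocity ω t₀ T z₀ zT) (ω ^ 2 • sinhBridge ω t₀ T z₀ zT t) t := by
  have h := ((((hasDerivAt_mul_sub_left ω t₀ t).cosh).smul_const zT).sub
    (((hasDerivAt_mul_sub_right ω T t).cosh).smul_const z₀)).const_smul (ω / sinh (ω * (T - t₀)))
  refine h.congr_deriv ?_
  simp only [sinhBridge]
  module

variable {ω t₀ T}

theorem sinhBridge_left (hs : sinh (ω * (T - t₀)) ≠ 0) : sinhBridge ω t₀ T z₀ zT t₀ = z₀ := by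
  simp [sinhBridge, smul_smul, hs]

theorem sinhBridge_right (hs : sinh (ω * (T - t₀)) ≠ 0) : sinhBridge ω t₀ T z₀ zT T = zT := by
  simp [sinhBridge, smul_smul, hs]

end

theorem stmt_3_general (K ω t₀ T : ℝ)
    (hs : Real.sinh (ω * (T - t₀)) ≠ 0)
    (z₀ zT : EuclideanSpace ℝ (Fin 2))
    (z a : ℝ → EuclideanSpace ℝ (Fin 2))
    (hz : z = fun t => (Real.sinh (ω * (T - t₀)))⁻¹ •
      (Real.sinh (ω * (t - t₀)) • zT + Real.sinh (ω * (T - t)) • z₀))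
    (ha : a = deriv z) :
    ∫ t in t₀..T, ((K / 2) * ‖a t‖ ^ 2 + (K * ω ^ 2 / 2) * ‖z t‖ ^ 2) =
      (K * ω / (2 * Real.sinh (ω * (T - t₀)))) *
        ((‖z₀‖ ^ 2 + ‖zT‖ ^ 2) * Real.cosh (ω * (T - t₀)) - 2 * (inner ℝ z₀ zT : ℝ)) := by
  have hz' : z = sinhBridge ω t₀ T z₀ zT := hz
  have ha' : a = sinhBridgeVelocity ω t₀ T z₀ zT := by
    rw [ha, hz']
    exact funext fun t => (hasDerivAt_sinhBridge ω t₀ T z₀ zT t).deriv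
  have hlagrangian : (fun t => (K / 2) * ‖a t‖ ^ 2 + (K * ω ^ 2 / 2) * ‖z t‖ ^ 2) =
      fun t => (K / 2) * (‖a t‖ ^ 2 + ω ^ 2 * ‖z t‖ ^ 2) := by
    funext t; ring
  rw [hlagrangian, integral_const_mul, ha', hz',
    integral_norm_sq_deriv_add_sq_mul_norm_sq (hasDerivAt_sinhBridge ω t₀ T z₀ zT)
      (hasDerivAt_sinhBridgeVelocity ω t₀ T z₀ zT),
    sinhBridge_left z₀ zT hs, sinhBridge_right z₀ zT hs]
  simp only [sinhBridgeVelocity, sub_self, mul_zero, cosh_zero, one_smul, real_inner_smul_right,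
    inner_sub_right, real_inner_smul_right, real_inner_self_eq_norm_sq, real_inner_comm zT z₀]
  field_simp
  ring

theorem stmt_3 (K ω t₀ T : ℝ) (hK : 0 < K) (hω : 0 < ω) (ht : t₀ < T)
    (hs : Real.sinh (ω * (T - t₀)) ≠ 0)
    (z₀ zT : EuclideanSpace ℝ (Fin 2))
    (z a : ℝ → EuclideanSpace ℝ (Fin 2))
    (hz : z = fun t => (Real.sinh (ω * (T - t₀)))⁻¹ •
      (Real.sinh (ω * (t - t₀)) • zT + Real.sinh (ω * (T - t)) • z₀))
    (ha : a = deriv z) :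
    ∫ t in t₀..T, ((K / 2) * ‖a t‖ ^ 2 + (K * ω ^ 2 / 2) * ‖z t‖ ^ 2) =
      (K * ω / (2 * Real.sinh (ω * (T - t₀)))) *
        ((‖z₀‖ ^ 2 + ‖zT‖ ^ 2) * Real.cosh (ω * (T - t₀)) - 2 * (inner ℝ z₀ zT : ℝ)) :=
  stmt_3_general K ω t₀ T hs z₀ zT z a hz ha
end

section
/- Let z: [t₀,T] → ℝ² be differentiable with derivative a = z', and let p(t) = ∇_a L(z(t), a(t)) satisfy the Euler–Lagrange equation p'(t) = ∇_z L(z(t), a(t)). If L is 2-homogeneous in (z,a), then ∫_{t₀}^{T} L(z(t), a(t)) dt = (1/2)(p(T) ⋅ z(T) − p(t₀) ⋅ z(t₀)). -/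
/-!
Euler's identity for the 2-homogeneous Lagrangian gives
`⟪∇_z L, z⟫ + ⟪∇_a L, a⟫ = 2 L`. Along a trajectory with `a = z'`, `p = ∇_a L` and the
Euler–Lagrange equation `p' = ∇_z L`, the left-hand side is exactly `(d/dt) ⟪p, z⟫`, so the
fundamental theorem of calculus gives `2 ∫ L = ⟪p, z⟫(T) - ⟪p, z⟫(t₀)`.
-/

open intervalIntegral

section Euler

variable {𝕜 E F G : Type*} [NontriviallyNormedField 𝕜]
  [NormedAddCommGroup E] [NormedSpace 𝕜 E] [NormedAddCommGroup F] [NormedSpace 𝕜 F]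
  [NormedAddCommGroup G] [NormedSpace 𝕜 G]

theorem fderiv_apply_self_eq_of_homogeneous {f : E → F} {x : E} (hf : DifferentiableAt 𝕜 f x)
    {n : ℕ} (hhom : ∀ c : 𝕜, f (c • x) = c ^ n • f x) :
    fderiv 𝕜 f x x = (n : 𝕜) • f x := by
  have hray : HasDerivAt (fun c : 𝕜 => c • x) x 1 := by
    simpa using (hasDerivAt_id (1 : 𝕜)).smul_const x
  have hcomp : HasDerivAt (fun c : 𝕜 => f (c • x)) (fderiv 𝕜 f x x) 1 := by
    have hf₁ : HasFDerivAt f (fderiv 𝕜 f x) ((1 : 𝕜) • x) := by simpa using hf.hasFDerivAt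
    exact hf₁.comp_hasDerivAt 1 hray
  have hpow : HasDerivAt (fun c : 𝕜 => c ^ n • f x) ((n : 𝕜) • f x) 1 := by
    simpa using (hasDerivAt_pow n (1 : 𝕜)).smul_const (f x)
  simp only [hhom] at hcomp
  exact hcomp.unique hpow

theorem fderiv_uncurry_apply_eq_add {f : E → F → G} {x : E} {y : F}
    (hf : DifferentiableAt 𝕜 (fun q : E × F => f q.1 q.2) (x, y)) (u : E) (v : F) :
    fderiv 𝕜 (fun q : E × F => f q.1 q.2) (x, y) (u, v) =
      fderiv 𝕜 (fun x' => f x' y) x u + fderiv 𝕜 (fun y' => f x y') y v := by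
  set D := fderiv 𝕜 (fun q : E × F => f q.1 q.2) (x, y)
  have hx : HasFDerivAt (fun x' => f x' y) (D.comp (.inl 𝕜 E F)) x := by
    exact hf.hasFDerivAt.comp x (hasFDerivAt_prodMk_left (𝕜 := 𝕜) x y)
  have hy : HasFDerivAt (fun y' => f x y') (D.comp (.inr 𝕜 E F)) y :=
    hf.hasFDerivAt.comp y (hasFDerivAt_prodMk_right (𝕜 := 𝕜) x y)
  rw [hx.fderiv, hy.fderiv, ContinuousLinearMap.comp_apply, ContinuousLinearMap.comp_apply,
    ← map_add]
  simp

end Euler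

section Gradient

variable {E : Type*} [NormedAddCommGroup E] [InnerProductSpace ℝ E] [CompleteSpace E]

theorem inner_gradient_add_inner_gradient_of_homogeneous {L : E → E → ℝ}
    (hL : Differentiable ℝ (fun q : E × E => L q.1 q.2))
    (hhom : ∀ (c : ℝ) (z a : E), L (c • z) (c • a) = c ^ 2 * L z a) (z a : E) :
    inner ℝ (gradient (fun w => L w a) z) z + inner ℝ (gradient (fun b => L z b) a) a =
      2 * L z a := by
  rw [inner_gradient_left, inner_gradient_left, ← fderiv_uncurry_apply_eq_add (hL (z, a))]
  simpa using fderiv_apply_self_eq_of_homogeneous (hL (z, a)) fun c => hhom c z a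

end Gradient

theorem stmt_5_general (t₀ T : ℝ)
    (L : EuclideanSpace ℝ (Fin 2) → EuclideanSpace ℝ (Fin 2) → ℝ)
    (hL : Differentiable ℝ (fun p : EuclideanSpace ℝ (Fin 2) × EuclideanSpace ℝ (Fin 2) => L p.1 p.2))
    (hhom : ∀ (lam : ℝ) (z a : EuclideanSpace ℝ (Fin 2)),
      L (lam • z) (lam • a) = lam ^ 2 * L z a)
    (z p : ℝ → EuclideanSpace ℝ (Fin 2))
    (hz : ContDiff ℝ 1 z) (hp : ContDiff ℝ 1 p)
    (hpdef : ∀ t, p t = gradient (fun a => L (z t) a) (deriv z t))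
    (hEL : ∀ t, deriv p t = gradient (fun w => L w (deriv z t)) (z t)) :
    ∫ t in t₀..T, L (z t) (deriv z t) =
      (1 / 2) * ((inner ℝ (p T) (z T) : ℝ) - (inner ℝ (p t₀) (z t₀) : ℝ)) := by
  have hderiv : ∀ t, HasDerivAt (fun t => inner ℝ (p t) (z t)) (2 * L (z t) (deriv z t)) t := by
    intro t
    have hpz := ((hp.differentiable one_ne_zero t).hasDerivAt).inner ℝ
      (hz.differentiable one_ne_zero t).hasDerivAt
    rwa [hpdef t, hEL t, add_comm,
      inner_gradient_add_inner_gradient_of_homogeneous hL hhom] at hpz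
  have hcont : Continuous fun t => L (z t) (deriv z t) :=
    hL.continuous.comp (hz.continuous.prodMk (hz.continuous_deriv le_rfl))
  have hftc := integral_eq_sub_of_hasDerivAt (fun t _ => hderiv t)
    ((continuous_const.mul hcont).intervalIntegrable t₀ T)
  rw [integral_const_mul] at hftc
  linarith

theorem stmt_5 (t₀ T : ℝ) (ht : t₀ < T)
    (L : EuclideanSpace ℝ (Fin 2) → EuclideanSpace ℝ (Fin 2) → ℝ)
    (hL : Differentiable ℝ (fun p : EuclideanSpace ℝ (Fin 2) × EuclideanSpace ℝ (Fin 2) => L p.1 p.2))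
    (hhom : ∀ (lam : ℝ) (z a : EuclideanSpace ℝ (Fin 2)),
      L (lam • z) (lam • a) = lam ^ 2 * L z a)
    (z p : ℝ → EuclideanSpace ℝ (Fin 2))
    (hz : ContDiff ℝ 1 z) (hp : ContDiff ℝ 1 p)
    (hpdef : ∀ t, p t = gradient (fun a => L (z t) a) (deriv z t))
    (hEL : ∀ t, deriv p t = gradient (fun w => L w (deriv z t)) (z t)) :
    ∫ t in t₀..T, L (z t) (deriv z t) =
      (1 / 2) * ((inner ℝ (p T) (z T) : ℝ) - (inner ℝ (p t₀) (z t₀) : ℝ)) :=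
  stmt_5_general t₀ T L hL hhom z p hz hp hpdef hEL
end

section
/- Let K > 0, ω > 0, φ > 0, x₁, x₂ ∈ ℝ², u = (x₁+x₂)/2, v = (x₂−x₁)/2. If ‖v‖/‖u‖ < tanh²(φ/2) and u ≠ 0, then (Kω³/sinh³φ) · ((‖x₁‖² + ‖x₂‖²) cosh φ − (x₁ ⋅ x₂)(1 + cosh²φ)) < 0. -/
/-!
Write `x₁ = u - v`, `x₂ = u + v` and `c = cosh φ`. By the parallelogram law the bracket equals
`‖v‖² (c + 1)² - ‖u‖² (c - 1)²`, while `tanh² (φ / 2) = (c - 1) / (c + 1)` turns the hypothesis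
into `‖v‖ (c + 1) < ‖u‖ (c - 1)`; squaring makes the bracket negative, and the prefactor is positive.
-/

open Real

theorem Real.tanh_half_sq (x : ℝ) : tanh (x / 2) ^ 2 = (cosh x - 1) / (cosh x + 1) := by
  obtain ⟨y, rfl⟩ : ∃ y, x = 2 * y := ⟨x / 2, by ring⟩
  have hy : cosh y ≠ 0 := (cosh_pos y).ne'
  rw [mul_div_cancel_left₀ y two_ne_zero, tanh_eq_sinh_div_cosh, cosh_two_mul,
    eq_div_iff (by positivity), div_pow, sinh_sq]
  field_simp
  ring

theorem norm_sub_sq_add_norm_add_sq_mul_sub_inner_mul {E : Type*} [NormedAddCommGroup E]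
    [InnerProductSpace ℝ E] (u v : E) (c : ℝ) :
    (‖u - v‖ ^ 2 + ‖u + v‖ ^ 2) * c - inner ℝ (u - v) (u + v) * (1 + c ^ 2) =
      ‖v‖ ^ 2 * (c + 1) ^ 2 - ‖u‖ ^ 2 * (c - 1) ^ 2 := by
  have hinner : inner ℝ (u - v) (u + v) = ‖u‖ ^ 2 - ‖v‖ ^ 2 := by
    rw [inner_sub_left, inner_add_right, inner_add_right, real_inner_comm v u,
      real_inner_self_eq_norm_sq, real_inner_self_eq_norm_sq]
    ring
  rw [add_comm (‖u - v‖ ^ 2), parallelogram_law_with_norm ℝ, hinner]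
  ring

theorem stmt_10 (K ω φ : ℝ) (hK : 0 < K) (hω : 0 < ω) (hφ : 0 < φ)
    (x₁ x₂ : EuclideanSpace ℝ (Fin 2))
    (u v : EuclideanSpace ℝ (Fin 2))
    (hu : u = (1 / 2 : ℝ) • (x₁ + x₂)) (hv : v = (1 / 2 : ℝ) • (x₂ - x₁))
    (hune : u ≠ 0)
    (hcond : ‖v‖ / ‖u‖ < Real.tanh (φ / 2) ^ 2) :
    (K * ω ^ 3 / Real.sinh φ ^ 3) *
      ((‖x₁‖ ^ 2 + ‖x₂‖ ^ 2) * Real.cosh φ - (inner ℝ x₁ x₂ : ℝ) * (1 + Real.cosh φ ^ 2)) < 0 := by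
  have hx₁ : x₁ = u - v := by rw [hu, hv]; module
  have hx₂ : x₂ = u + v := by rw [hu, hv]; module
  have hsinh : 0 < sinh φ := sinh_pos_iff.2 hφ
  have hcosh : 1 < cosh φ := one_lt_cosh.2 hφ.ne'
  have hlt : ‖v‖ * (cosh φ + 1) < ‖u‖ * (cosh φ - 1) := by
    rw [tanh_half_sq, div_lt_div_iff₀ (norm_pos_iff.2 hune) (by linarith)] at hcond
    linarith
  refine mul_neg_of_pos_of_neg (by positivity) ?_
  rw [hx₁, hx₂, norm_sub_sq_add_norm_add_sq_mul_sub_inner_mul, sub_neg, ← mul_pow, ← mul_pow]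
  exact pow_lt_pow_left₀ hlt (by positivity) two_ne_zero
end

section
/- Let ω₁, ω₂ > 0 and t₀ < τ < T. Define B(τ) ∈ ℝ² by h·B(τ) = ω₁ z_{h1} coth(ω₁(τ−t₀)) + ω₂ z_{h2} coth(ω₂(T−τ)) + ω₁(z₀ − z_{h1})/sinh(ω₁(τ−t₀)) + ω₂(z_T − z_{h2})/sinh(ω₂(T−τ)), where h = ω₁ coth(ω₁(τ−t₀)) + ω₂ coth(ω₂(T−τ)). Then B(τ) → z₀ as τ → t₀⁺ and B(τ) → z_T as τ → T⁻. -/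
open Filter Topology

private lemma aux18 (ω₁ ω₂ t₀ T : ℝ) (hω₁ : 0 < ω₁) (hω₂ : 0 < ω₂) (ht : t₀ < T)
    (z₀ zT zh₁ zh₂ : EuclideanSpace ℝ (Fin 2))
    (B : ℝ → EuclideanSpace ℝ (Fin 2))
    (hB : ∀ τ ∈ Set.Ioo t₀ T, B τ =
      (ω₁ * (Real.cosh (ω₁ * (τ - t₀)) / Real.sinh (ω₁ * (τ - t₀)))
        + ω₂ * (Real.cosh (ω₂ * (T - τ)) / Real.sinh (ω₂ * (T - τ))))⁻¹ •
      ((ω₁ * (Real.cosh (ω₁ * (τ - t₀)) / Real.sinh (ω₁ * (τ - t₀)))) • zh₁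
       + (ω₂ * (Real.cosh (ω₂ * (T - τ)) / Real.sinh (ω₂ * (T - τ)))) • zh₂
       + (ω₁ / Real.sinh (ω₁ * (τ - t₀))) • (z₀ - zh₁)
       + (ω₂ / Real.sinh (ω₂ * (T - τ))) • (zT - zh₂))) :
    Tendsto B (nhdsWithin t₀ (Set.Ioo t₀ T)) (nhds z₀) := by
  have hs2 : (0:ℝ) < Real.sinh (ω₂ * (T - t₀)) :=
    Real.sinh_pos_iff.mpr (mul_pos hω₂ (sub_pos.mpr ht))
  set F : ℝ → ℝ := fun τ => ω₁ * Real.cosh (ω₁ * (τ - t₀))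
      + ω₂ * (Real.cosh (ω₂ * (T - τ)) / Real.sinh (ω₂ * (T - τ))) * Real.sinh (ω₁ * (τ - t₀))
    with hF
  set G : ℝ → EuclideanSpace ℝ (Fin 2) := fun τ =>
      (ω₁ * Real.cosh (ω₁ * (τ - t₀))) • zh₁
      + (ω₂ * (Real.cosh (ω₂ * (T - τ)) / Real.sinh (ω₂ * (T - τ))) * Real.sinh (ω₁ * (τ - t₀))) • zh₂
      + ω₁ • (z₀ - zh₁)
      + (ω₂ / Real.sinh (ω₂ * (T - τ)) * Real.sinh (ω₁ * (τ - t₀))) • (zT - zh₂)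
    with hG
  have key : ∀ τ ∈ Set.Ioo t₀ T, B τ = (F τ)⁻¹ • G τ := by
    rintro τ ⟨ha, hb⟩
    have hs1 : (0:ℝ) < Real.sinh (ω₁ * (τ - t₀)) :=
      Real.sinh_pos_iff.mpr (mul_pos hω₁ (sub_pos.mpr ha))
    have hs2' : (0:ℝ) < Real.sinh (ω₂ * (T - τ)) :=
      Real.sinh_pos_iff.mpr (mul_pos hω₂ (sub_pos.mpr hb))
    have eF : F τ = Real.sinh (ω₁ * (τ - t₀)) *
        (ω₁ * (Real.cosh (ω₁ * (τ - t₀)) / Real.sinh (ω₁ * (τ - t₀)))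
          + ω₂ * (Real.cosh (ω₂ * (T - τ)) / Real.sinh (ω₂ * (T - τ)))) := by
      simp only [hF]; field_simp
    have eG : G τ = Real.sinh (ω₁ * (τ - t₀)) •
        ((ω₁ * (Real.cosh (ω₁ * (τ - t₀)) / Real.sinh (ω₁ * (τ - t₀)))) • zh₁
         + (ω₂ * (Real.cosh (ω₂ * (T - τ)) / Real.sinh (ω₂ * (T - τ)))) • zh₂
         + (ω₁ / Real.sinh (ω₁ * (τ - t₀))) • (z₀ - zh₁)
         + (ω₂ / Real.sinh (ω₂ * (T - τ))) • (zT - zh₂)) := by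
      simp only [hG]
      match_scalars <;> field_simp <;> ring
    rw [hB τ ⟨ha, hb⟩, eF, eG, smul_smul, mul_inv_rev, mul_assoc,
      inv_mul_cancel₀ hs1.ne', mul_one]
  have hFc : ContinuousAt F t₀ := by
    refine ContinuousAt.add (by fun_prop) (ContinuousAt.mul (ContinuousAt.mul continuousAt_const
      (ContinuousAt.div (by fun_prop) (by fun_prop) hs2.ne')) (by fun_prop))
  have hd : ContinuousAt (fun τ => Real.cosh (ω₂ * (T - τ)) / Real.sinh (ω₂ * (T - τ))) t₀ :=
    ContinuousAt.div (by fun_prop) (by fun_prop) hs2.ne'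
  have hd2 : ContinuousAt (fun τ => ω₂ / Real.sinh (ω₂ * (T - τ))) t₀ :=
    ContinuousAt.div (by fun_prop) (by fun_prop) hs2.ne'
  have hGc : ContinuousAt G t₀ := by
    refine ((((?_ : ContinuousAt (fun τ => ω₁ * Real.cosh (ω₁ * (τ - t₀))) t₀).smul
      continuousAt_const).add (((continuousAt_const.mul hd).mul (?_ :
        ContinuousAt (fun τ => Real.sinh (ω₁ * (τ - t₀))) t₀)).smul continuousAt_const)).add
      continuousAt_const).add ((hd2.mul (?_ :
        ContinuousAt (fun τ => Real.sinh (ω₁ * (τ - t₀))) t₀)).smul continuousAt_const)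
    all_goals fun_prop
  have hF0 : F t₀ = ω₁ := by simp [hF]
  have hG0 : G t₀ = ω₁ • z₀ := by
    simp only [hG, sub_self, mul_zero, Real.sinh_zero, Real.cosh_zero, mul_one, zero_smul,
      add_zero, mul_zero]
    module
  have main : Tendsto (fun τ => (F τ)⁻¹ • G τ) (nhdsWithin t₀ (Set.Ioo t₀ T)) (nhds z₀) := by
    have t1 : Tendsto F (nhdsWithin t₀ (Set.Ioo t₀ T)) (nhds ω₁) :=
      hF0 ▸ hFc.tendsto.mono_left nhdsWithin_le_nhds
    have t2 : Tendsto G (nhdsWithin t₀ (Set.Ioo t₀ T)) (nhds (ω₁ • z₀)) :=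
      hG0 ▸ hGc.tendsto.mono_left nhdsWithin_le_nhds
    have := (t1.inv₀ hω₁.ne').smul t2
    simpa [smul_smul, inv_mul_cancel₀ hω₁.ne'] using this
  exact main.congr' (by filter_upwards [self_mem_nhdsWithin] with τ hτ using (key τ hτ).symm)
    

theorem stmt_18 (ω₁ ω₂ t₀ T : ℝ) (hω₁ : 0 < ω₁) (hω₂ : 0 < ω₂) (ht : t₀ < T)
    (z₀ zT zh₁ zh₂ : EuclideanSpace ℝ (Fin 2))
    (h : ℝ → ℝ)
    (hh : ∀ τ, h τ = ω₁ * (Real.cosh (ω₁ * (τ - t₀)) / Real.sinh (ω₁ * (τ - t₀)))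
                   + ω₂ * (Real.cosh (ω₂ * (T - τ)) / Real.sinh (ω₂ * (T - τ))))
    (B : ℝ → EuclideanSpace ℝ (Fin 2))
    (hB : ∀ τ ∈ Set.Ioo t₀ T, B τ = (h τ)⁻¹ •
      ((ω₁ * (Real.cosh (ω₁ * (τ - t₀)) / Real.sinh (ω₁ * (τ - t₀)))) • zh₁
       + (ω₂ * (Real.cosh (ω₂ * (T - τ)) / Real.sinh (ω₂ * (T - τ)))) • zh₂
       + (ω₁ / Real.sinh (ω₁ * (τ - t₀))) • (z₀ - zh₁)
       + (ω₂ / Real.sinh (ω₂ * (T - τ))) • (zT - zh₂))) :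
    Tendsto B (nhdsWithin t₀ (Set.Ioo t₀ T)) (nhds z₀) ∧
    Tendsto B (nhdsWithin T (Set.Ioo t₀ T)) (nhds zT) := by
  constructor
  · exact aux18 ω₁ ω₂ t₀ T hω₁ hω₂ ht z₀ zT zh₁ zh₂ B fun τ hτ => by rw [hB τ hτ, hh]
  · have hB' : ∀ τ ∈ Set.Ioo t₀ T, B (t₀ + T - τ) =
        (ω₂ * (Real.cosh (ω₂ * (τ - t₀)) / Real.sinh (ω₂ * (τ - t₀)))
          + ω₁ * (Real.cosh (ω₁ * (T - τ)) / Real.sinh (ω₁ * (T - τ))))⁻¹ •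
        ((ω₂ * (Real.cosh (ω₂ * (τ - t₀)) / Real.sinh (ω₂ * (τ - t₀)))) • zh₂
         + (ω₁ * (Real.cosh (ω₁ * (T - τ)) / Real.sinh (ω₁ * (T - τ)))) • zh₁
         + (ω₂ / Real.sinh (ω₂ * (τ - t₀))) • (zT - zh₂)
         + (ω₁ / Real.sinh (ω₁ * (T - τ))) • (z₀ - zh₁)) := by
      rintro τ ⟨ha, hb⟩
      have hσ : t₀ + T - τ ∈ Set.Ioo t₀ T := ⟨by linarith, by linarith⟩
      have e1 : t₀ + T - τ - t₀ = T - τ := by ring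
      have e2 : T - (t₀ + T - τ) = τ - t₀ := by ring
      rw [hB _ hσ, hh, e1, e2]
      congr 1
      · ring
      · abel
    have t' := aux18 ω₂ ω₁ t₀ T hω₂ hω₁ ht zT z₀ zh₂ zh₁ (fun τ => B (t₀ + T - τ)) hB'
    have hr : Tendsto (fun τ => t₀ + T - τ) (nhdsWithin T (Set.Ioo t₀ T))
        (nhdsWithin t₀ (Set.Ioo t₀ T)) := by
      rw [tendsto_nhdsWithin_iff]
      constructor
      · have : Tendsto (fun τ : ℝ => t₀ + T - τ) (nhds T) (nhds (t₀ + T - T)) :=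
          (continuous_const.sub continuous_id).tendsto T
        simpa using this.mono_left nhdsWithin_le_nhds
      · filter_upwards [self_mem_nhdsWithin] with τ hτ
        exact ⟨by linarith [hτ.2], by linarith [hτ.1]⟩
    refine (t'.comp hr).congr fun τ => ?_
    simp only [Function.comp]
    ring_nf
end
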